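/- Soundness and completeness of transitive FD chaining for singleton-left-hand-side dependencies: let Σ be a set of functional dependencies of the form a → b with single attributes a, b over a finite attribute set U, viewed as a relation R on U. Then for single attributes a ≠ b, the FD a → b is derivable from Σ by Armstrong's axioms if and only if (a, b) is in the reflexive-transitive closure of R. -/

import Mathlib

/-!
Completeness: a path `a → ⋯ → b` in `R` is a chain of members of `Σ`, composed by transitivity.
Soundness: for every derivable `X → Y`, each attribute of `Y` is reachable in `R` from some
attribute of `X`; each Armstrong rule preserves this invariant, the membership rule precisely
because every member of `Σ` has singleton sides.
-/

/-- Armstrong derivability: `Derives Σ X Y` means the FD `X → Y` is derivable from `Σ`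
using membership, reflexivity, augmentation and transitivity. -/
inductive Derives {U : Type*} (Sigma : Set (Set U × Set U)) : Set U → Set U → Prop
  | mem {X Y : Set U} : (X, Y) ∈ Sigma → Derives Sigma X Y
  | refl {X Y : Set U} : Y ⊆ X → Derives Sigma X Y
  | aug {X Y : Set U} (W : Set U) : Derives Sigma X Y → Derives Sigma (X ∪ W) (Y ∪ W)
  | trans {X Y Z : Set U} : Derives Sigma X Y → Derives Sigma Y Z → Derives Sigma X Z

namespace Derives

variable {U : Type*} {Sigma : Set (Set U × Set U)}

/-- The relation `R` of the singleton dependencies in `Σ`. -/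
def singletonGraph (Sigma : Set (Set U × Set U)) (x y : U) : Prop :=
  (({x} : Set U), ({y} : Set U)) ∈ Sigma

theorem of_reflTransGen {a b : U} (h : Relation.ReflTransGen (singletonGraph Sigma) a b) :
    Derives Sigma {a} {b} := by
  induction h with
  | refl => exact .refl le_rfl
  | tail _ hbc ih => exact ih.trans (.mem hbc)

theorem subset_reachable (hsing : ∀ p ∈ Sigma, ∃ a b : U, p = ({a}, {b}))
    {X Y : Set U} (h : Derives Sigma X Y) :
    Y ⊆ {y | ∃ x ∈ X, Relation.ReflTransGen (singletonGraph Sigma) x y} := by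
  induction h with
  | @mem X Y hXY =>
    obtain ⟨c, d, hcd⟩ := hsing _ hXY
    obtain ⟨rfl, rfl⟩ := Prod.mk.inj hcd
    rintro y rfl
    exact ⟨c, rfl, .single hXY⟩
  | refl hYX => exact fun y hy => ⟨y, hYX hy, .refl⟩
  | aug W _ ih =>
    rintro y (hy | hy)
    · obtain ⟨x, hx, hxy⟩ := ih hy
      exact ⟨x, .inl hx, hxy⟩
    · exact ⟨y, .inr hy, .refl⟩
  | trans _ _ ih₁ ih₂ =>
    intro z hz
    obtain ⟨y, hy, hyz⟩ := ih₂ hz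
    obtain ⟨x, hx, hxy⟩ := ih₁ hy
    exact ⟨x, hx, hxy.trans hyz⟩

end Derives

theorem singleton_fd_derivable_iff_reflTransGen_general {U : Type*}
    (Sigma : Set (Set U × Set U))
    (hsing : ∀ p ∈ Sigma, ∃ a b : U, p = ({a}, {b}))
    (a b : U) :
    Derives Sigma {a} {b} ↔
      Relation.ReflTransGen (fun x y : U => (({x} : Set U), ({y} : Set U)) ∈ Sigma) a b := by
  refine ⟨fun h => ?_, Derives.of_reflTransGen⟩
  obtain ⟨x, rfl, hab⟩ := h.subset_reachable hsing rfl
  exact hab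

theorem singleton_fd_derivable_iff_reflTransGen {U : Type*} [Fintype U]
    (Sigma : Set (Set U × Set U))
    (hsing : ∀ p ∈ Sigma, ∃ a b : U, p = ({a}, {b}))
    (a b : U) (hab : a ≠ b) :
    Derives Sigma {a} {b} ↔
      Relation.ReflTransGen (fun x y : U => (({x} : Set U), ({y} : Set U)) ∈ Sigma) a b :=
  singleton_fd_derivable_iff_reflTransGen_general Sigma hsing a b
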